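/- For all θ, η ∈ ℝ with θ − η ∉ 2πℤ, the normalized chord outer product of the unit circle equals M(θ,η): ((X⋆(θ)−X⋆(η)) ⊗ (X⋆(θ)−X⋆(η))) / |X⋆(θ)−X⋆(η)|² = M(θ,η). Moreover, for every θ ∈ ℝ, (1/π) ∫_{−π}^{π} M(θ,η) dη = I, the 2×2 identity matrix. -/

import Mathlib

open Real intervalIntegral

/-- The counterclockwise unit-circle parametrization `X⋆(θ) = (cos θ, sin θ)`. -/
noncomputable def Xstar (θ : ℝ) : Fin 2 → ℝ := ![Real.cos θ, Real.sin θ]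

/-- The matrix kernel
`M(θ,η) = (1/2)·[[1−cos(θ+η), −sin(θ+η)], [−sin(θ+η), 1+cos(θ+η)]]`. -/
noncomputable def Mmat (θ η : ℝ) : Matrix (Fin 2) (Fin 2) ℝ :=
  (1 / 2 : ℝ) •
    !![1 - Real.cos (θ + η), -Real.sin (θ + η);
       -Real.sin (θ + η), 1 + Real.cos (θ + η)]

/-!
With `φ = (θ + η) / 2`, the sum-to-product formulas give
`X⋆(θ) - X⋆(η) = 2 sin((θ - η)/2) · (-sin φ, cos φ)`. The scalar is nonzero exactly when
`θ - η ∉ 2πℤ`, and it cancels in the normalized outer product, leaving the outer product of the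
unit vector `(-sin φ, cos φ)`, which the double-angle formulas turn into `M(θ, η)`.
For the mean, the entries of `M(θ, ·)` are `1/2` (on the diagonal) or `0`, plus
multiples of `cos(θ + η)` and `sin(θ + η)`, which integrate to zero over a full period.
-/

noncomputable def normalizedOuter (v : Fin 2 → ℝ) : Matrix (Fin 2) (Fin 2) ℝ :=
  Matrix.of fun i j => v i * v j / (v 0 ^ 2 + v 1 ^ 2)

lemma normalizedOuter_smul {c : ℝ} (hc : c ≠ 0) (v : Fin 2 → ℝ) :
    normalizedOuter (c • v) = normalizedOuter v := by
  ext i j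
  simp only [normalizedOuter, Matrix.of_apply, Pi.smul_apply, smul_eq_mul]
  rw [show (c * v 0) ^ 2 + (c * v 1) ^ 2 = c ^ 2 * (v 0 ^ 2 + v 1 ^ 2) by ring,
    show c * v i * (c * v j) = c ^ 2 * (v i * v j) by ring,
    mul_div_mul_left _ _ (pow_ne_zero 2 hc)]

lemma normalizedOuter_neg_sin_cos (φ : ℝ) :
    normalizedOuter ![-sin φ, cos φ] =
      (1 / 2 : ℝ) • !![1 - cos (2 * φ), -sin (2 * φ); -sin (2 * φ), 1 + cos (2 * φ)] := by
  ext i j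
  fin_cases i <;> fin_cases j <;>
    simp [normalizedOuter, sin_two_mul, cos_two_mul', sin_sq_add_cos_sq] <;>
      linarith [sin_sq_add_cos_sq φ]

lemma Xstar_sub_Xstar (θ η : ℝ) :
    Xstar θ - Xstar η =
      (2 * sin ((θ - η) / 2)) • ![-sin ((θ + η) / 2), cos ((θ + η) / 2)] := by
  ext i
  fin_cases i
  · simp only [Xstar, Fin.zero_eta, Pi.sub_apply, Matrix.cons_val_zero, cos_sub_cos,
      Pi.smul_apply, smul_eq_mul]
    ring
  · simp [Xstar, sin_sub_sin]

lemma Mmat_eq_normalizedOuter (θ η : ℝ) :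
    Mmat θ η = normalizedOuter ![-sin ((θ + η) / 2), cos ((θ + η) / 2)] := by
  rw [normalizedOuter_neg_sin_cos, mul_div_cancel₀ _ two_ne_zero, Mmat]

lemma integral_cos_add_eq_zero (θ : ℝ) : ∫ η in (-π)..π, cos (θ + η) = 0 := by
  rw [integral_comp_add_left cos θ, integral_cos, ← sub_eq_add_neg, sin_add_pi, sin_sub_pi,
    sub_self]

lemma integral_sin_add_eq_zero (θ : ℝ) : ∫ η in (-π)..π, sin (θ + η) = 0 := by
  rw [integral_comp_add_left sin θ, integral_sin, ← sub_eq_add_neg, cos_add_pi, cos_sub_pi,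
    sub_self]

lemma integral_Mmat_apply (θ : ℝ) (i j : Fin 2) :
    ∫ η in (-π)..π, Mmat θ η i j = π * (1 : Matrix (Fin 2) (Fin 2) ℝ) i j := by
  have hcos : IntervalIntegrable (fun η => cos (θ + η)) MeasureTheory.volume (-π) π :=
    (continuous_cos.comp (continuous_const_add θ)).intervalIntegrable _ _
  fin_cases i <;> fin_cases j <;>
    simp [Mmat, -integral_comp_add_left, integral_sub, integral_add, hcos,
      integral_cos_add_eq_zero, integral_sin_add_eq_zero] <;> ring

theorem chord_outer_product_eq_Mmat_and_mean :
    (∀ θ η : ℝ, (∀ m : ℤ, θ - η ≠ 2 * π * m) →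
      (Matrix.of fun i j =>
          ((Xstar θ - Xstar η) i * (Xstar θ - Xstar η) j) /
            ((Xstar θ - Xstar η) 0 ^ 2 + (Xstar θ - Xstar η) 1 ^ 2)) = Mmat θ η) ∧
    (∀ θ : ℝ,
      (1 / π) • (Matrix.of fun i j => ∫ η in (-π)..π, Mmat θ η i j) =
        (1 : Matrix (Fin 2) (Fin 2) ℝ)) := by
  refine ⟨fun θ η hθη => ?_, fun θ => ?_⟩
  · have hsin : sin ((θ - η) / 2) ≠ 0 := fun h => by
      obtain ⟨m, hm⟩ := sin_eq_zero_iff.mp h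
      exact hθη m (by linarith)
    change normalizedOuter (Xstar θ - Xstar η) = Mmat θ η
    rw [Xstar_sub_Xstar, normalizedOuter_smul (mul_ne_zero two_ne_zero hsin),
      Mmat_eq_normalizedOuter]
  · ext i j
    simp [integral_Mmat_apply, pi_ne_zero]
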